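/- arXiv:2208.12882 — 3 statements merged into one kernel-verified Lean document; each statement's English description precedes it below -/
import Mathlib

section
/- Let K and H be topological groups acting continuously on topological spaces Z and Y respectively, let m : K → H be a continuous group homomorphism and ε : Z → Y a continuous map with ε(k • z) = m(k) • ε(z) for all k ∈ K, z ∈ Z, and assume (m, ε) is an essential equivalence. Let (H × Z)/∼ be the quotient of H × Z by the relation (h, z) ∼ (h · m(k)⁻¹, k • z) for k ∈ K, endowed with the quotient topology and the H-action induced by left multiplication on the first coordinate. Then the map (h, z) ↦ h • ε(z) descends to a well-defined H-equivariant homeomorphism (H × Z)/∼ → Y. -/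
/-!
Full faithfulness says that two points of `H × Z` with the same image `h • ε z` in `Y` differ by
an element of `K`, so `(h, z) ↦ h • ε z` is constant exactly on the classes of `∼`; essential
surjectivity makes this map an open quotient map, and a quotient map whose fibres are the classes
of a relation induces a homeomorphism from the quotient by that relation.
-/

open Topology

theorem Topology.IsQuotientMap.isHomeomorph_quot_lift {X Y : Type*} [TopologicalSpace X]
    [TopologicalSpace Y] {r : X → X → Prop} {f : X → Y} (hf : IsQuotientMap f)
    (hr : ∀ a b, r a b → f a = f b) (hfibre : ∀ a b, f a = f b → r a b) :
    IsHomeomorph (Quot.lift f hr) := by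
  refine isHomeomorph_iff_isQuotientMap_injective.mpr ⟨?_, ?_⟩
  · exact isQuotientMap_quot_mk.of_comp_isQuotientMap hf
  · rintro ⟨a⟩ ⟨b⟩ hab
    exact Quot.sound (hfibre a b hab)

section BalancedProduct

variable {K H Z Y : Type*} [Group K] [Group H] [MulAction K Z] [MulAction H Y]

def balancedProductRel (m : K →* H) (a b : H × Z) : Prop :=
  ∃ k : K, b = (a.1 * (m k)⁻¹, k • a.2)

variable {m : K →* H} {ε : Z → Y}

theorem smul_apply_eq_of_balancedProductRel (hequiv : ∀ (k : K) (z : Z), ε (k • z) = m k • ε z)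
    (a b : H × Z) (hab : balancedProductRel m a b) : a.1 • ε a.2 = b.1 • ε b.2 := by
  obtain ⟨k, rfl⟩ := hab
  simp only [hequiv, smul_smul, inv_mul_cancel_right]

theorem balancedProductRel_of_smul_apply_eq
    (hFF : ∀ (z z' : Z) (h : H), h • ε z = ε z' → ∃ k : K, k • z = z' ∧ m k = h)
    (a b : H × Z) (hab : a.1 • ε a.2 = b.1 • ε b.2) : balancedProductRel m a b := by
  obtain ⟨h, z⟩ := a
  obtain ⟨h', z'⟩ := b
  have hmove : (h'⁻¹ * h) • ε z = ε z' := by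
    rw [mul_smul, show h • ε z = h' • ε z' from hab, inv_smul_smul]
  obtain ⟨k, rfl, hk⟩ := hFF z z' (h'⁻¹ * h) hmove
  exact ⟨k, by rw [hk, mul_inv_rev, inv_inv, mul_inv_cancel_left]⟩

end BalancedProduct

theorem essentialEquivalence_induced_homeomorph_general
    {K H Z Y : Type*} [Group K]
    [Group H] [TopologicalSpace H]
    [TopologicalSpace Z] [MulAction K Z]
    [TopologicalSpace Y] [MulAction H Y]
    (m : K →* H) (ε : Z → Y)
    (hequiv : ∀ (k : K) (z : Z), ε (k • z) = m k • ε z)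
    (hES_cont : Continuous fun p : H × Z => p.1 • ε p.2)
    (hES_open : IsOpenMap fun p : H × Z => p.1 • ε p.2)
    (hES_surj : Function.Surjective fun p : H × Z => p.1 • ε p.2)
    (hFF : ∀ (z z' : Z) (h : H), h • ε z = ε z' → ∃! k : K, k • z = z' ∧ m k = h) :
    ∃ φ : Quot (fun a b : H × Z => ∃ k : K, b = (a.1 * (m k)⁻¹, k • a.2)) ≃ₜ Y,
      (∀ (h : H) (z : Z),
        φ (Quot.mk (fun a b : H × Z => ∃ k : K, b = (a.1 * (m k)⁻¹, k • a.2)) (h, z)) = h • ε z) ∧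
      (∀ (h' h : H) (z : Z),
        φ (Quot.mk (fun a b : H × Z => ∃ k : K, b = (a.1 * (m k)⁻¹, k • a.2)) (h' * h, z)) =
          h' • φ (Quot.mk (fun a b : H × Z => ∃ k : K, b = (a.1 * (m k)⁻¹, k • a.2)) (h, z))) := by
  have hquot : IsQuotientMap fun p : H × Z => p.1 • ε p.2 :=
    IsOpenQuotientMap.isQuotientMap ⟨hES_surj, hES_cont, hES_open⟩
  have hhomeo : IsHomeomorph (Quot.lift _ (smul_apply_eq_of_balancedProductRel hequiv)) :=
    hquot.isHomeomorph_quot_lift _ <|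
      balancedProductRel_of_smul_apply_eq fun z z' h hh => (hFF z z' h hh).exists
  exact ⟨hhomeo.homeomorph, fun _ _ => rfl, fun h' h z => mul_smul h' h (ε z)⟩

/-- Let `K` and `H` be topological groups acting continuously on topological spaces `Z` and `Y`,
let `m : K → H` be a continuous homomorphism and `ε : Z → Y` a continuous map with
`ε (k • z) = m k • ε z`, and assume `(m, ε)` is an essential equivalence. Let `(H × Z)/∼` be the
quotient of `H × Z` by the relation `(h, z) ∼ (h * (m k)⁻¹, k • z)` for `k ∈ K`, with the quotient
topology and the `H`-action induced by left multiplication on the first coordinate. Then the map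
`(h, z) ↦ h • ε z` descends to a well-defined `H`-equivariant homeomorphism `(H × Z)/∼ → Y`. -/
theorem essentialEquivalence_induced_homeomorph
    {K H Z Y : Type*} [Group K] [TopologicalSpace K] [IsTopologicalGroup K]
    [Group H] [TopologicalSpace H] [IsTopologicalGroup H]
    [TopologicalSpace Z] [MulAction K Z] [ContinuousSMul K Z]
    [TopologicalSpace Y] [MulAction H Y] [ContinuousSMul H Y]
    (m : K →* H) (hm : Continuous m) (ε : Z → Y) (hε : Continuous ε)
    (hequiv : ∀ (k : K) (z : Z), ε (k • z) = m k • ε z)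
    (hES_cont : Continuous fun p : H × Z => p.1 • ε p.2)
    (hES_open : IsOpenMap fun p : H × Z => p.1 • ε p.2)
    (hES_surj : Function.Surjective fun p : H × Z => p.1 • ε p.2)
    (hFF : ∀ (z z' : Z) (h : H), h • ε z = ε z' → ∃! k : K, k • z = z' ∧ m k = h) :
    ∃ φ : Quot (fun a b : H × Z => ∃ k : K, b = (a.1 * (m k)⁻¹, k • a.2)) ≃ₜ Y,
      (∀ (h : H) (z : Z),
        φ (Quot.mk (fun a b : H × Z => ∃ k : K, b = (a.1 * (m k)⁻¹, k • a.2)) (h, z)) = h • ε z) ∧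
      (∀ (h' h : H) (z : Z),
        φ (Quot.mk (fun a b : H × Z => ∃ k : K, b = (a.1 * (m k)⁻¹, k • a.2)) (h' * h, z)) =
          h' • φ (Quot.mk (fun a b : H × Z => ∃ k : K, b = (a.1 * (m k)⁻¹, k • a.2)) (h, z))) :=
  essentialEquivalence_induced_homeomorph_general m ε hequiv hES_cont hES_open hES_surj hFF
end

section
/- Let K and G be topological groups, let K act continuously on a topological space Z and let G act continuously on a topological space X. Let m, n : K → G be continuous homomorphisms, let φ : Z → X be a continuous map satisfying φ(k • z) = n(k) • φ(z) for all k ∈ K, z ∈ Z, and let λ : Z → G be a continuous map satisfying n(k) = λ(k • z) · m(k) · λ(z)⁻¹ for all k ∈ K, z ∈ Z. Consider the quotient (G × Z)/∼ by the relation (g, z) ∼ (g · m(k)⁻¹, k • z) for k ∈ K, with the quotient topology and the G-action induced by left multiplication on the first coordinate. Then the map G × Z → X, (g, z) ↦ (g · λ(z)⁻¹) • φ(z), is constant on equivalence classes, and the induced continuous map φ̂ : (G × Z)/∼ → X is G-equivariant, i.e. φ̂(g' · [g, z]) = g' • φ̂([g, z]) for all g' ∈ G. -/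
/-! The twist by `λ⁻¹` absorbs the discrepancy between `m` and `n`: natural conjugacy reads
`λ (k • z) * m k = n k * λ z`, so moving `(g, z)` to `(g * (m k)⁻¹, k • z)` replaces
`g * (λ z)⁻¹` by `g * (λ z)⁻¹ * (n k)⁻¹`, which the `n`-equivariance of `φ` cancels. -/

section InducedMap

variable {K G Z X : Type*} [Group G] [MulAction G X]

def inducedMap (lam : Z → G) (φ : Z → X) (p : G × Z) : X :=
  (p.1 * (lam p.2)⁻¹) • φ p.2

theorem inducedMap_mul_left (lam : Z → G) (φ : Z → X) (g' g : G) (z : Z) :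
    inducedMap lam φ (g' * g, z) = g' • inducedMap lam φ (g, z) := by
  rw [inducedMap, inducedMap, smul_smul, mul_assoc]

theorem continuous_inducedMap [TopologicalSpace G] [ContinuousMul G] [ContinuousInv G]
    [TopologicalSpace Z] [TopologicalSpace X] [ContinuousSMul G X]
    {lam : Z → G} {φ : Z → X} (hlam : Continuous lam) (hφ : Continuous φ) :
    Continuous (inducedMap lam φ) :=
  (continuous_fst.mul (hlam.comp continuous_snd).inv).smul (hφ.comp continuous_snd)

theorem inducedMap_mul_inv_smul [Group K] [MulAction K Z] (m n : K →* G)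
    {lam : Z → G} {φ : Z → X} (hequiv : ∀ (k : K) (z : Z), φ (k • z) = n k • φ z)
    (hconj : ∀ (k : K) (z : Z), n k = lam (k • z) * m k * (lam z)⁻¹) (g : G) (k : K) (z : Z) :
    inducedMap lam φ (g * (m k)⁻¹, k • z) = inducedMap lam φ (g, z) := by
  have htwist : g * (m k)⁻¹ * (lam (k • z))⁻¹ * n k = g * (lam z)⁻¹ := by
    rw [hconj k z]
    group
  rw [inducedMap, inducedMap, hequiv, smul_smul, htwist]

end InducedMap

theorem naturally_conjugate_induced_equivariant_map_general
    {K G Z X : Type*} [Group K]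
    [Group G] [TopologicalSpace G] [IsTopologicalGroup G]
    [TopologicalSpace Z] [MulAction K Z]
    [TopologicalSpace X] [MulAction G X] [ContinuousSMul G X]
    (m n : K →* G)
    (φ : Z → X) (hφ : Continuous φ)
    (hequiv : ∀ (k : K) (z : Z), φ (k • z) = n k • φ z)
    (lam : Z → G) (hlam : Continuous lam)
    (hconj : ∀ (k : K) (z : Z), n k = lam (k • z) * m k * (lam z)⁻¹) :
    (∀ a b : G × Z, (∃ k : K, b = (a.1 * (m k)⁻¹, k • a.2)) →
        (a.1 * (lam a.2)⁻¹) • φ a.2 = (b.1 * (lam b.2)⁻¹) • φ b.2) ∧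
    ∃ φhat : Quot (fun a b : G × Z => ∃ k : K, b = (a.1 * (m k)⁻¹, k • a.2)) → X,
      Continuous φhat ∧
      (∀ (g : G) (z : Z),
        φhat (Quot.mk (fun a b : G × Z => ∃ k : K, b = (a.1 * (m k)⁻¹, k • a.2)) (g, z)) =
          (g * (lam z)⁻¹) • φ z) ∧
      (∀ (g' g : G) (z : Z),
        φhat (Quot.mk (fun a b : G × Z => ∃ k : K, b = (a.1 * (m k)⁻¹, k • a.2)) (g' * g, z)) =
          g' • φhat (Quot.mk (fun a b : G × Z => ∃ k : K, b = (a.1 * (m k)⁻¹, k • a.2)) (g, z))) := by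
  have hconst : ∀ a b : G × Z, (∃ k : K, b = (a.1 * (m k)⁻¹, k • a.2)) →
      inducedMap lam φ a = inducedMap lam φ b := by
    rintro ⟨g, z⟩ b ⟨k, rfl⟩
    exact (inducedMap_mul_inv_smul m n hequiv hconj g k z).symm
  exact ⟨hconst, Quot.lift (inducedMap lam φ) hconst,
    continuous_quot_lift _ (continuous_inducedMap hlam hφ), fun _ _ => rfl,
    inducedMap_mul_left lam φ⟩

/-- Let `K, G` be topological groups, `K` acting continuously on `Z` and `G` acting continuously
on `X`. Let `m, n : K → G` be continuous homomorphisms, `φ : Z → X` continuous with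
`φ (k • z) = n k • φ z`, and `λ : Z → G` continuous with `n k = λ (k • z) * m k * (λ z)⁻¹`.
Consider the quotient `(G × Z)/∼` by the relation `(g, z) ∼ (g * (m k)⁻¹, k • z)`, with the
quotient topology and the `G`-action induced by left multiplication on the first coordinate.
Then the map `G × Z → X, (g, z) ↦ (g * (λ z)⁻¹) • φ z` is constant on equivalence classes, and
the induced continuous map `φ̂ : (G × Z)/∼ → X` is `G`-equivariant. -/
theorem naturally_conjugate_induced_equivariant_map
    {K G Z X : Type*} [Group K] [TopologicalSpace K] [IsTopologicalGroup K]
    [Group G] [TopologicalSpace G] [IsTopologicalGroup G]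
    [TopologicalSpace Z] [MulAction K Z] [ContinuousSMul K Z]
    [TopologicalSpace X] [MulAction G X] [ContinuousSMul G X]
    (m n : K →* G) (hm : Continuous m) (hn : Continuous n)
    (φ : Z → X) (hφ : Continuous φ)
    (hequiv : ∀ (k : K) (z : Z), φ (k • z) = n k • φ z)
    (lam : Z → G) (hlam : Continuous lam)
    (hconj : ∀ (k : K) (z : Z), n k = lam (k • z) * m k * (lam z)⁻¹) :
    (∀ a b : G × Z, (∃ k : K, b = (a.1 * (m k)⁻¹, k • a.2)) →
        (a.1 * (lam a.2)⁻¹) • φ a.2 = (b.1 * (lam b.2)⁻¹) • φ b.2) ∧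
    ∃ φhat : Quot (fun a b : G × Z => ∃ k : K, b = (a.1 * (m k)⁻¹, k • a.2)) → X,
      Continuous φhat ∧
      (∀ (g : G) (z : Z),
        φhat (Quot.mk (fun a b : G × Z => ∃ k : K, b = (a.1 * (m k)⁻¹, k • a.2)) (g, z)) =
          (g * (lam z)⁻¹) • φ z) ∧
      (∀ (g' g : G) (z : Z),
        φhat (Quot.mk (fun a b : G × Z => ∃ k : K, b = (a.1 * (m k)⁻¹, k • a.2)) (g' * g, z)) =
          g' • φhat (Quot.mk (fun a b : G × Z => ∃ k : K, b = (a.1 * (m k)⁻¹, k • a.2)) (g, z))) :=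
  naturally_conjugate_induced_equivariant_map_general m n φ hφ hequiv lam hlam hconj
end

section
/- Let K and G be topological groups, let K act continuously on a topological space Z, let m, n : K → G be continuous homomorphisms, and let λ : Z → G be a continuous map satisfying n(k) = λ(k • z) · m(k) · λ(z)⁻¹ for all k ∈ K, z ∈ Z. Let E = (G × G × Z)/∼ be the quotient by the relation (g, h, z) ∼ (g · n(k), h · m(k), k⁻¹ • z) for k ∈ K, and let W = (G × Z)/∼' be the quotient by the relation (h, z) ∼' (h · m(k), k⁻¹ • z) for k ∈ K, both with the quotient topology. Then the map w : E → W given by w([g, h, z]) = [h, z] is well defined, the map τ : W → E given by τ([h, z]) = [h · λ(z)⁻¹, h, z] is well defined and continuous, and w ∘ τ is the identity of W; that is, τ is a global section of w. -/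
/-! Twisting the first coordinate by `λ(z)⁻¹` turns the `m`-action into the `n`-action: the
conjugacy relation says `(h λ(z)⁻¹) n(k) = (h m(k)) λ(k⁻¹ • z)⁻¹`, so `τ` respects the relations,
and `w ∘ τ = id` already holds on representatives. -/

section NaturalConjugacy

variable {K G Z : Type*} [Group K] [Group G] [MulAction K Z]

/-- The relation defining `E = (G × G × Z)/∼`. -/
def bundleRel (m n : K →* G) (a b : G × G × Z) : Prop :=
  ∃ k : K, b = (a.1 * n k, a.2.1 * m k, k⁻¹ • a.2.2)

/-- The relation defining `W = (G × Z)/∼'`. -/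
def baseRel (m : K →* G) (a b : G × Z) : Prop :=
  ∃ k : K, b = (a.1 * m k, k⁻¹ • a.2)

def bundleProj (m n : K →* G) : Quot (bundleRel (Z := Z) m n) → Quot (baseRel (Z := Z) m) :=
  Quot.lift (fun p => Quot.mk _ p.2) fun _ _ ⟨k, hk⟩ => Quot.sound ⟨k, by rw [hk]⟩

theorem inv_mul_eq_mul_inv_of_conj {m n : K →* G} {lam : Z → G}
    (hconj : ∀ (k : K) (z : Z), n k = lam (k • z) * m k * (lam z)⁻¹) (k : K) (z : Z) :
    (lam z)⁻¹ * n k = m k * (lam (k⁻¹ • z))⁻¹ := by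
  rw [hconj k (k⁻¹ • z), smul_inv_smul]
  group

def conjSection {m n : K →* G} {lam : Z → G}
    (hconj : ∀ (k : K) (z : Z), n k = lam (k • z) * m k * (lam z)⁻¹) :
    Quot (baseRel (Z := Z) m) → Quot (bundleRel (Z := Z) m n) :=
  Quot.lift (fun p => Quot.mk _ (p.1 * (lam p.2)⁻¹, p.1, p.2)) fun ⟨h, z⟩ _ ⟨k, hk⟩ =>
    Quot.sound ⟨k, by subst hk; simp only [mul_assoc, inv_mul_eq_mul_inv_of_conj hconj]⟩

theorem bundleProj_conjSection {m n : K →* G} {lam : Z → G}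
    (hconj : ∀ (k : K) (z : Z), n k = lam (k • z) * m k * (lam z)⁻¹) (x : Quot (baseRel m)) :
    bundleProj m n (conjSection hconj x) = x := by
  induction x using Quot.ind
  rfl

theorem continuous_conjSection [TopologicalSpace G] [ContinuousMul G] [ContinuousInv G]
    [TopologicalSpace Z] {m n : K →* G} {lam : Z → G}
    (hconj : ∀ (k : K) (z : Z), n k = lam (k • z) * m k * (lam z)⁻¹) (hlam : Continuous lam) :
    Continuous (conjSection hconj) :=
  continuous_quot_lift _ <| continuous_quot_mk.comp <|
    (continuous_fst.mul (hlam.comp continuous_snd).inv).prodMk continuous_id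

end NaturalConjugacy

theorem global_section_of_naturally_conjugate_general
    {K G Z : Type*} [Group K]
    [Group G] [TopologicalSpace G] [IsTopologicalGroup G]
    [TopologicalSpace Z] [MulAction K Z]
    (m n : K →* G)
    (lam : Z → G) (hlam : Continuous lam)
    (hconj : ∀ (k : K) (z : Z), n k = lam (k • z) * m k * (lam z)⁻¹) :
    ∃ w : Quot (fun a b : G × G × Z => ∃ k : K, b = (a.1 * n k, a.2.1 * m k, k⁻¹ • a.2.2)) →
        Quot (fun a b : G × Z => ∃ k : K, b = (a.1 * m k, k⁻¹ • a.2)),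
      (∀ (g h : G) (z : Z),
        w (Quot.mk (fun a b : G × G × Z => ∃ k : K, b = (a.1 * n k, a.2.1 * m k, k⁻¹ • a.2.2))
            (g, h, z)) =
          Quot.mk (fun a b : G × Z => ∃ k : K, b = (a.1 * m k, k⁻¹ • a.2)) (h, z)) ∧
      ∃ τ : Quot (fun a b : G × Z => ∃ k : K, b = (a.1 * m k, k⁻¹ • a.2)) →
          Quot (fun a b : G × G × Z => ∃ k : K, b = (a.1 * n k, a.2.1 * m k, k⁻¹ • a.2.2)),
        Continuous τ ∧
        (∀ (h : G) (z : Z),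
          τ (Quot.mk (fun a b : G × Z => ∃ k : K, b = (a.1 * m k, k⁻¹ • a.2)) (h, z)) =
            Quot.mk (fun a b : G × G × Z => ∃ k : K, b = (a.1 * n k, a.2.1 * m k, k⁻¹ • a.2.2))
              (h * (lam z)⁻¹, h, z)) ∧
        (∀ x, w (τ x) = x) :=
  ⟨bundleProj m n, fun _ _ _ => rfl, conjSection hconj, continuous_conjSection hconj hlam,
    fun _ _ => rfl, bundleProj_conjSection hconj⟩

/-- Let `K, G` be topological groups, `K` acting continuously on `Z`, `m, n : K → G` continuous
homomorphisms, and `λ : Z → G` continuous with `n k = λ (k • z) * m k * (λ z)⁻¹`. Let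
`E = (G × G × Z)/∼` be the quotient by `(g, h, z) ∼ (g * n k, h * m k, k⁻¹ • z)` and
`W = (G × Z)/∼'` the quotient by `(h, z) ∼' (h * m k, k⁻¹ • z)`, both with the quotient topology.
Then `w : E → W, [g, h, z] ↦ [h, z]` is well defined, `τ : W → E, [h, z] ↦ [h * (λ z)⁻¹, h, z]`
is well defined and continuous, and `w ∘ τ = id`; that is, `τ` is a global section of `w`. -/
theorem global_section_of_naturally_conjugate
    {K G Z : Type*} [Group K] [TopologicalSpace K] [IsTopologicalGroup K]
    [Group G] [TopologicalSpace G] [IsTopologicalGroup G]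
    [TopologicalSpace Z] [MulAction K Z] [ContinuousSMul K Z]
    (m n : K →* G) (hm : Continuous m) (hn : Continuous n)
    (lam : Z → G) (hlam : Continuous lam)
    (hconj : ∀ (k : K) (z : Z), n k = lam (k • z) * m k * (lam z)⁻¹) :
    ∃ w : Quot (fun a b : G × G × Z => ∃ k : K, b = (a.1 * n k, a.2.1 * m k, k⁻¹ • a.2.2)) →
        Quot (fun a b : G × Z => ∃ k : K, b = (a.1 * m k, k⁻¹ • a.2)),
      (∀ (g h : G) (z : Z),
        w (Quot.mk (fun a b : G × G × Z => ∃ k : K, b = (a.1 * n k, a.2.1 * m k, k⁻¹ • a.2.2))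
            (g, h, z)) =
          Quot.mk (fun a b : G × Z => ∃ k : K, b = (a.1 * m k, k⁻¹ • a.2)) (h, z)) ∧
      ∃ τ : Quot (fun a b : G × Z => ∃ k : K, b = (a.1 * m k, k⁻¹ • a.2)) →
          Quot (fun a b : G × G × Z => ∃ k : K, b = (a.1 * n k, a.2.1 * m k, k⁻¹ • a.2.2)),
        Continuous τ ∧
        (∀ (h : G) (z : Z),
          τ (Quot.mk (fun a b : G × Z => ∃ k : K, b = (a.1 * m k, k⁻¹ • a.2)) (h, z)) =
            Quot.mk (fun a b : G × G × Z => ∃ k : K, b = (a.1 * n k, a.2.1 * m k, k⁻¹ • a.2.2))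
              (h * (lam z)⁻¹, h, z)) ∧
        (∀ x, w (τ x) = x) :=
  global_section_of_naturally_conjugate_general m n lam hlam hconj
end
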